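/- arXiv:0907.2397 — 2 statements merged into one kernel-verified Lean document; each statement's English description precedes it below -/
import Mathlib

section
/- Let n ≥ 1 and let S be an n×n complex symmetric matrix (Sᵀ = S) all of whose leading principal minors are nonzero. Then there exists a lower triangular n×n complex matrix U such that Uᵀ U = S⁻¹ (equivalently, U⁻¹ (Uᵀ)⁻¹ = S). -/
/-!
Bordering method: if the leading block `A` of `S` factors as `A = L Lᵀ` with `L` lower triangular,
border `L` by a last row `(wᵀ, a)` with `L w = b` (the last column of `S` above the diagonal;
solvable because `det A ≠ 0`) and `a² = s - w ⬝ w` (a square root exists since `ℂ` is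
algebraically closed). This gives `S = L Lᵀ` by induction, and `U = L⁻¹` is lower triangular with
`Uᵀ U = (L Lᵀ)⁻¹ = S⁻¹`.
-/

open Matrix

theorem Fin.snoc_dotProduct_snoc {α : Type*} [Mul α] [AddCommMonoid α] {n : ℕ}
    (u v : Fin n → α) (x y : α) :
    (Fin.snoc u x : Fin (n + 1) → α) ⬝ᵥ Fin.snoc v y = u ⬝ᵥ v + x * y := by
  simp [dotProduct, Fin.sum_univ_castSucc]

namespace Matrix

theorem BlockTriangular.nonsing_inv {m α R : Type*} [Fintype m] [DecidableEq m] [LinearOrder α]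
    [CommRing R] {M : Matrix m m R} {b : m → α} (hM : M.BlockTriangular b) :
    M⁻¹.BlockTriangular b := by
  by_cases h : IsUnit M.det
  · have := M.invertibleOfIsUnitDet h
    exact blockTriangular_inv_of_blockTriangular hM
  · rw [nonsing_inv_apply_not_isUnit M h]
    exact blockTriangular_zero

section LeadingMinors

variable {R : Type*} [CommRing R] {n : ℕ}

def LeadingMinorsNeZero (S : Matrix (Fin n) (Fin n) R) : Prop :=
  ∀ (k : ℕ) (hk : k ≤ n), 1 ≤ k → (S.submatrix (Fin.castLE hk) (Fin.castLE hk)).det ≠ 0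

theorem LeadingMinorsNeZero.submatrix_castSucc {S : Matrix (Fin (n + 1)) (Fin (n + 1)) R}
    (hS : S.LeadingMinorsNeZero) : (S.submatrix Fin.castSucc Fin.castSucc).LeadingMinorsNeZero :=
  fun k hk hk1 => hS k (hk.trans n.le_succ) hk1

theorem LeadingMinorsNeZero.det_ne_zero [Nontrivial R] {S : Matrix (Fin n) (Fin n) R}
    (hS : S.LeadingMinorsNeZero) : S.det ≠ 0 := by
  cases n with
  | zero => simp
  | succ n => exact hS (n + 1) le_rfl n.succ_pos

end LeadingMinors

section LowerBorder

variable {R : Type*} [CommSemiring R] {n : ℕ}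

/-- The bordered matrix `[[L, 0], [wᵀ, a]]`. -/
def lowerBorder (L : Matrix (Fin n) (Fin n) R) (w : Fin n → R) (a : R) :
    Matrix (Fin (n + 1)) (Fin (n + 1)) R :=
  of (Fin.lastCases (Fin.snoc w a) fun i => Fin.snoc (L i) 0)

variable {L : Matrix (Fin n) (Fin n) R} {w : Fin n → R} {a : R}

@[simp]
theorem lowerBorder_castSucc (i : Fin n) : lowerBorder L w a i.castSucc = Fin.snoc (L i) 0 := by
  ext j
  simp [lowerBorder]

@[simp]
theorem lowerBorder_last : lowerBorder L w a (Fin.last n) = Fin.snoc w a := by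
  ext j
  simp [lowerBorder]

theorem BlockTriangular.lowerBorder (hL : L.BlockTriangular OrderDual.toDual) :
    (lowerBorder L w a).BlockTriangular OrderDual.toDual := by
  intro i j hij
  induction i using Fin.lastCases with
  | last => exact absurd hij (not_lt.2 (Fin.le_last j))
  | cast i =>
    induction j using Fin.lastCases with
    | last => simp
    | cast j => simpa using hL (Fin.castSucc_lt_castSucc_iff.1 hij)

theorem lowerBorder_mul_transpose {S : Matrix (Fin (n + 1)) (Fin (n + 1)) R} (hS : S.IsSymm)
    (hL : L * Lᵀ = S.submatrix Fin.castSucc Fin.castSucc)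
    (hw : L *ᵥ w = fun i => S i.castSucc (Fin.last n))
    (ha : w ⬝ᵥ w + a * a = S (Fin.last n) (Fin.last n)) :
    lowerBorder L w a * (lowerBorder L w a)ᵀ = S := by
  ext i j
  simp only [mul_apply', transpose_apply]
  induction i using Fin.lastCases with
  | last =>
    induction j using Fin.lastCases with
    | last => simpa [Fin.snoc_dotProduct_snoc] using ha
    | cast j =>
      simpa [Fin.snoc_dotProduct_snoc, dotProduct_comm w, hS.apply, mulVec] using congrFun hw j
  | cast i =>
    induction j using Fin.lastCases with
    | last => simpa [Fin.snoc_dotProduct_snoc, mulVec] using congrFun hw i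
    | cast j => simpa [Fin.snoc_dotProduct_snoc, mul_apply'] using congrFun₂ hL i j

end LowerBorder

theorem exists_lowerTriangular_mul_transpose_eq {K : Type*} [Field K] [IsAlgClosed K] {n : ℕ}
    {S : Matrix (Fin n) (Fin n) K} (hS : S.IsSymm) (hminors : S.LeadingMinorsNeZero) :
    ∃ L : Matrix (Fin n) (Fin n) K, L.BlockTriangular OrderDual.toDual ∧ L * Lᵀ = S := by
  induction n with
  | zero => exact ⟨1, fun i => i.elim0, Subsingleton.elim _ _⟩
  | succ n ih =>
    obtain ⟨L, hL, hLS⟩ := ih (hS.submatrix Fin.castSucc) hminors.submatrix_castSucc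
    have hLunit : IsUnit L := isUnit_of_mul_isUnit_left (y := Lᵀ) <| by
      rw [hLS, isUnit_iff_isUnit_det, isUnit_iff_ne_zero]
      exact hminors.submatrix_castSucc.det_ne_zero
    obtain ⟨w, hw⟩ := mulVec_surjective_iff_isUnit.2 hLunit fun i => S i.castSucc (Fin.last n)
    obtain ⟨a, ha⟩ := IsAlgClosed.exists_eq_mul_self (S (Fin.last n) (Fin.last n) - w ⬝ᵥ w)
    exact ⟨lowerBorder L w a, hL.lowerBorder,
      lowerBorder_mul_transpose hS hLS hw (by rw [← ha]; ring)⟩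

end Matrix

theorem toeplitz_decomposition_general (n : ℕ)
    (S : Matrix (Fin n) (Fin n) ℂ) (hsymm : Sᵀ = S)
    (hminors : ∀ (k : ℕ) (hk : k ≤ n), 1 ≤ k →
      (S.submatrix (Fin.castLE hk) (Fin.castLE hk)).det ≠ 0) :
    ∃ U : Matrix (Fin n) (Fin n) ℂ,
      (∀ i j : Fin n, i < j → U i j = 0) ∧ Uᵀ * U = S⁻¹ := by
  obtain ⟨L, hL, hLS⟩ := exists_lowerTriangular_mul_transpose_eq hsymm hminors
  refine ⟨L⁻¹, fun i j hij => hL.nonsing_inv hij, ?_⟩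
  rw [transpose_nonsing_inv, ← Matrix.mul_inv_rev, hLS]

/-- Toeplitz (1907): a complex symmetric matrix with all leading principal minors
nonzero admits a lower triangular `U` with `Uᵀ * U = S⁻¹`. -/
theorem toeplitz_decomposition (n : ℕ) (hn : 1 ≤ n)
    (S : Matrix (Fin n) (Fin n) ℂ) (hsymm : Sᵀ = S)
    (hminors : ∀ (k : ℕ) (hk : k ≤ n), 1 ≤ k →
      (S.submatrix (Fin.castLE hk) (Fin.castLE hk)).det ≠ 0) :
    ∃ U : Matrix (Fin n) (Fin n) ℂ,
      (∀ i j : Fin n, i < j → U i j = 0) ∧ Uᵀ * U = S⁻¹ :=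
  toeplitz_decomposition_general n S hsymm hminors
end

section
/- Let A be a p×n real matrix such that A Aᵀ is invertible, and let K ∈ ℝᵖ. Let L be a lower triangular p×p matrix with L Lᵀ = A Aᵀ, let y ∈ ℝᵖ satisfy L y + K = 0, and let λ ∈ ℝᵖ satisfy Lᵀ λ = y. Then x = Aᵀ λ satisfies A x + K = 0, and for every x′ ∈ ℝⁿ with A x′ + K = 0 and x′ ≠ x one has ‖x‖ < ‖x′‖; that is, x is the unique minimum-Euclidean-norm solution of A x + K = 0. -/
open Matrix

/-- Cholesky's method (Benoit 1924) for the adjustment of conditioned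
observations: solving `L y + K = 0` and `Lᵀ λ = y` with `L Lᵀ = A Aᵀ` and
setting `x = Aᵀ λ` yields the unique minimum-Euclidean-norm solution of
`A x + K = 0`. -/
theorem cholesky_conditioned_observations (p n : ℕ)
    (A : Matrix (Fin p) (Fin n) ℝ) (hA : IsUnit (A * Aᵀ)) (K : Fin p → ℝ)
    (L : Matrix (Fin p) (Fin p) ℝ)
    (hLlow : ∀ i j : Fin p, i < j → L i j = 0)
    (hLLT : L * Lᵀ = A * Aᵀ)
    (y lam : Fin p → ℝ)
    (hy : L *ᵥ y + K = 0)
    (hlam : Lᵀ *ᵥ lam = y) :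
    A *ᵥ (Aᵀ *ᵥ lam) + K = 0 ∧
    ∀ x' : Fin n → ℝ, A *ᵥ x' + K = 0 → x' ≠ Aᵀ *ᵥ lam →
      Real.sqrt (∑ i, (Aᵀ *ᵥ lam) i ^ 2) < Real.sqrt (∑ i, (x' i) ^ 2) := by
  set x : Fin n → ℝ := Aᵀ *ᵥ lam with hx
  have hAx : A *ᵥ x + K = 0 := by
    have : A *ᵥ x = L *ᵥ y := by
      rw [hx, mulVec_mulVec, ← hLLT, ← mulVec_mulVec, hlam]
    rw [this]; exact hy
  refine ⟨hAx, ?_⟩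
  intro x' hx' hne
  set d : Fin n → ℝ := x' - x with hd
  have hAd : A *ᵥ d = 0 := by
    have : A *ᵥ x' - A *ᵥ x = 0 := by
      have := sub_eq_zero.mpr (hx'.trans hAx.symm)
      simpa [add_sub_add_right_eq_sub] using this
    simpa [hd, mulVec_sub] using this
  have hortho : x ⬝ᵥ d = 0 := by
    have : x ⬝ᵥ d = lam ⬝ᵥ (A *ᵥ d) := by
      rw [hx, mulVec_transpose, ← dotProduct_mulVec]
    rw [this, hAd, dotProduct_zero]
  have hdd : 0 < d ⬝ᵥ d := by
    have hdne : d ≠ 0 := by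
      intro h
      exact hne (by rwa [hd, sub_eq_zero] at h)
    obtain ⟨i, hi⟩ := Function.ne_iff.mp hdne
    refine Finset.sum_pos' (fun j _ => mul_self_nonneg _) ⟨i, Finset.mem_univ i, ?_⟩
    exact mul_self_pos.mpr (by simpa using hi)
  have hsum : (∑ i, (x i) ^ 2) < ∑ i, (x' i) ^ 2 := by
    have hx'd : ∀ i, x' i = x i + d i := fun i => by simp [hd]
    have hexp : ∑ i, (x' i) ^ 2
        = (∑ i, (x i) ^ 2) + 2 * (x ⬝ᵥ d) + d ⬝ᵥ d := by
      simp only [dotProduct, Finset.mul_sum, ← Finset.sum_add_distrib]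
      refine Finset.sum_congr rfl fun i _ => ?_
      rw [hx'd i]; ring
    rw [hexp, hortho]
    linarith
  have h1 : (0:ℝ) ≤ ∑ i, (x i) ^ 2 := Finset.sum_nonneg fun i _ => sq_nonneg _
  exact Real.sqrt_lt_sqrt h1 hsum
end
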